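/- Let G(x) = (1/2)e^{-|x|} and let α ∈ (0,1). Define for each positive integer N the weight φ_N(x) = 1 for x < 0, φ_N(x) = e^{αx} for 0 ≤ x ≤ N, and φ_N(x) = e^{αN} for x > N. Then there exists a constant C₀ > 0, independent of N, such that φ_N(x)·(G ∗ φ_N^{-1})(x) ≤ C₀ and φ_N(x)·|(∂ₓG ∗ φ_N^{-1})(x)| ≤ C₀ for all x ∈ ℝ. -/

import Mathlib

/-!
Writing `φ_N(x) = exp (α · c(x))` with the clamp `c(x) = min (max x 0) N`, which is 1-Lipschitz,
gives `φ_N(x) / φ_N(y) ≤ exp (α |x - y|)`. Both kernels are bounded by `e^{-|z|} / 2`, so the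
weighted convolutions are bounded by `∫ e^{-(1-α)|x-y|} / 2 dy = 1 / (1 - α)`, uniformly in `N`.
-/

open MeasureTheory Real

/-- The weight function `φ_N`. -/
noncomputable def phi (α : ℝ) (N : ℕ) (x : ℝ) : ℝ :=
  if x < 0 then 1
  else if x ≤ (N : ℝ) then Real.exp (α * x)
  else Real.exp (α * N)

lemma phi_eq_exp_clamp (α : ℝ) (N : ℕ) (x : ℝ) :
    phi α N x = exp (α * min (max x 0) (N : ℝ)) := by
  unfold phi
  split_ifs with hneg hle
  · rw [max_eq_right hneg.le, min_eq_left (Nat.cast_nonneg N), mul_zero, exp_zero]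
  · rw [max_eq_left (not_lt.mp hneg), min_eq_left hle]
  · rw [max_eq_left (not_lt.mp hneg), min_eq_right (not_le.mp hle).le]

lemma one_le_phi {α : ℝ} (hα : 0 ≤ α) (N : ℕ) (x : ℝ) : 1 ≤ phi α N x := by
  rw [phi_eq_exp_clamp]
  exact one_le_exp (mul_nonneg hα (le_min (le_max_right x 0) (Nat.cast_nonneg N)))

lemma phi_pos {α : ℝ} (hα : 0 ≤ α) (N : ℕ) (x : ℝ) : 0 < phi α N x :=
  one_pos.trans_le (one_le_phi hα N x)

lemma phi_le_exp_mul_abs_sub_mul_phi {α : ℝ} (hα : 0 ≤ α) (N : ℕ) (x y : ℝ) :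
    phi α N x ≤ exp (α * |x - y|) * phi α N y := by
  rw [phi_eq_exp_clamp, phi_eq_exp_clamp, ← exp_add, exp_le_exp]
  have hclamp : |min (max x 0) (N : ℝ) - min (max y 0) (N : ℝ)| ≤ |x - y| :=
    calc |min (max x 0) (N : ℝ) - min (max y 0) (N : ℝ)|
        ≤ max |max x 0 - max y 0| |(N : ℝ) - N| := abs_min_sub_min_le_max _ _ _ _
      _ ≤ |x - y| := by
          rw [sub_self, abs_zero]
          exact max_le (abs_max_sub_max_le_abs x y 0) (abs_nonneg _)
  have := mul_le_mul_of_nonneg_left ((le_abs_self _).trans hclamp) hα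
  rw [mul_sub] at this
  linarith

lemma integral_exp_neg_mul_abs {b : ℝ} (hb : 0 < b) : ∫ y : ℝ, exp (-b * |y|) = 2 / b := by
  rw [integral_comp_abs (f := fun t => exp (-b * t)), integral_exp_mul_Ioi (neg_neg_of_pos hb),
    mul_zero, exp_zero]
  field_simp

lemma integrable_exp_neg_mul_abs {b : ℝ} (hb : 0 < b) :
    Integrable fun y : ℝ => exp (-b * |y|) :=
  Integrable.of_integral_ne_zero (by rw [integral_exp_neg_mul_abs hb]; positivity)

lemma Real.abs_sign_le_one (r : ℝ) : |sign r| ≤ 1 := by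
  rcases sign_apply_eq r with h | h | h <;> norm_num [h]

theorem phi_mul_abs_integral_div_phi_le {α : ℝ} (hα₀ : 0 ≤ α) (hα₁ : α < 1) (N : ℕ) {k : ℝ → ℝ}
    (hk : ∀ z, |k z| ≤ exp (-|z|) / 2) (x : ℝ) :
    phi α N x * |∫ y, k (x - y) / phi α N y| ≤ 1 / (1 - α) := by
  have hb : 0 < 1 - α := sub_pos.mpr hα₁
  have hφx := phi_pos hα₀ N x
  set g : ℝ → ℝ := fun y => exp (-(1 - α) * |x - y|) / 2
  have hg_int : Integrable g :=
    ((integrable_exp_neg_mul_abs hb).comp_sub_left x).div_const 2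
  have hg_val : ∫ y, g y = 1 / (1 - α) := by
    rw [integral_div, integral_sub_left_eq_self (fun y => exp (-(1 - α) * |y|)),
      integral_exp_neg_mul_abs hb]
    field_simp
  have hbound : ∀ y, ‖phi α N x * (k (x - y) / phi α N y)‖ ≤ g y := fun y => by
    have hφy := phi_pos hα₀ N y
    calc ‖phi α N x * (k (x - y) / phi α N y)‖
        = phi α N x / phi α N y * |k (x - y)| := by
          rw [norm_eq_abs, abs_mul, abs_div, abs_of_pos hφx, abs_of_pos hφy]
          ring
      _ ≤ exp (α * |x - y|) * (exp (-|x - y|) / 2) := by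
          gcongr
          · exact (div_le_iff₀ hφy).mpr (phi_le_exp_mul_abs_sub_mul_phi hα₀ N x y)
          · exact hk (x - y)
      _ = g y := by
          simp only [g]
          rw [mul_div_assoc', ← exp_add]
          ring_nf
  calc phi α N x * |∫ y, k (x - y) / phi α N y|
      = ‖∫ y, phi α N x * (k (x - y) / phi α N y)‖ := by
        rw [integral_const_mul, norm_mul, norm_eq_abs, norm_eq_abs, abs_of_pos hφx]
    _ ≤ ∫ y, g y := norm_integral_le_of_norm_le hg_int (.of_forall hbound)
    _ = 1 / (1 - α) := hg_val

/-- `φ_N(x)(G ∗ φ_N⁻¹)(x) ≤ C₀` and `φ_N(x)|(∂ₓG ∗ φ_N⁻¹)(x)| ≤ C₀` uniformly in `N` and `x`,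
where `G(x) = (1/2)e^{-|x|}` and `∂ₓG(x) = -(1/2) sgn(x) e^{-|x|}`. -/
theorem phiN_weighted_conv_bounds (α : ℝ) (hα : α ∈ Set.Ioo (0:ℝ) 1) :
    ∃ C₀ > (0:ℝ), ∀ N : ℕ, 0 < N → ∀ x : ℝ,
      phi α N x * (∫ y : ℝ, (1/2) * Real.exp (-|x - y|) / phi α N y) ≤ C₀ ∧
      phi α N x * |∫ y : ℝ, (-(1/2)) * Real.sign (x - y) * Real.exp (-|x - y|) / phi α N y| ≤ C₀ := by
  obtain ⟨hα₀, hα₁⟩ := hα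
  refine ⟨1 / (1 - α), one_div_pos.mpr (sub_pos.mpr hα₁), fun N _ x => ⟨?_, ?_⟩⟩
  · have hG : ∀ z : ℝ, |1 / 2 * exp (-|z|)| ≤ exp (-|z|) / 2 := fun z => by
      rw [abs_of_pos (by positivity)]
      linarith
    exact (mul_le_mul_of_nonneg_left (le_abs_self _) (phi_pos hα₀.le N x).le).trans
      (phi_mul_abs_integral_div_phi_le hα₀.le hα₁ N hG x)
  · have hG' : ∀ z : ℝ, |-(1 / 2) * sign z * exp (-|z|)| ≤ exp (-|z|) / 2 := fun z => by
      rw [abs_mul, abs_mul, abs_of_pos (exp_pos _)]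
      nlinarith [Real.abs_sign_le_one z, exp_pos (-|z|), abs_nonneg (sign z)]
    exact phi_mul_abs_integral_div_phi_le hα₀.le hα₁ N hG' x
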